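/- arXiv:1905.08120 — 2 statements merged into one kernel-verified Lean document; each statement's English description precedes it below -/
import Mathlib

section
/- Let n ≥ 1, 1 ≤ i ≤ j ≤ n, k ≥ 0, and let P be a k-Rvalid vector of size n with exactly i nonempty entries. Then the number of elements of succ(P) having exactly j nonempty entries equals ((n−i)!/(n−j)!)·T(i,j), where T(i,j) is the number of partitions of {1,…,2i} into j nonempty blocks such that the elements 1, 2, …, i lie in pairwise distinct blocks (T(i,j) is the i-restricted Stirling number {2i over j}_i). -/
open Finset

/-- `Π·h`: the vector whose `q`-th entry is the union of the `Π p` over all `p` with `h p = q`. -/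
def dotAct {n : ℕ} (Pi : Fin n → Finset ℕ) (h : Fin n → Fin n) : Fin n → Finset ℕ :=
  fun q => (Finset.univ.filter (fun p => h p = q)).biUnion Pi

/-- Entrywise union of two vectors of sets. -/
def vUnion {n : ℕ} (Pi Pi' : Fin n → Finset ℕ) : Fin n → Finset ℕ :=
  fun q => Pi q ∪ Pi' q

/-- `r = max (π₀ ∪ … ∪ π_{n−1})`. -/
def vMax {n : ℕ} (Pi : Fin n → Finset ℕ) : ℕ :=
  (Finset.univ.sup Pi).sup id

/-- `Π↑`: add `r = max (π₀ ∪ … ∪ π_{n−1})` to every element of every entry. -/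
def vUp {n : ℕ} (Pi : Fin n → Finset ℕ) : Fin n → Finset ℕ :=
  fun q => (Pi q).image (· + vMax Pi)

/-- A `k`-EXPcomposition of size `n`: pairwise disjoint entries whose union is `{1,…,2^k}`. -/
def IsEXP {n : ℕ} (k : ℕ) (Pi : Fin n → Finset ℕ) : Prop :=
  (∀ p q : Fin n, p ≠ q → Disjoint (Pi p) (Pi q)) ∧
    Finset.univ.sup Pi = Finset.Icc 1 (2 ^ k)

/-- A `k`-Rvalid vector of size `n`. -/
def IsRvalid {n : ℕ} (k : ℕ) (ρ : Fin n → Finset ℕ) : Prop :=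
  IsEXP k ρ ∧ (∀ p : Fin n, p.val = 0 → 1 ∈ ρ p) ∧
    ∀ k' < k, ∀ i ∈ Finset.Icc 1 (2 ^ k'), ∀ j ∈ Finset.Icc 1 (2 ^ k'),
      (∃ α, i ∈ ρ α ∧ j ∈ ρ α) → ∃ β, i + 2 ^ k' ∈ ρ β ∧ j + 2 ^ k' ∈ ρ β

/-- A `k`-Lvalid vector of size `m`. -/
def IsLvalid {m : ℕ} (k : ℕ) (lam : Fin m → Finset ℕ) : Prop :=
  IsEXP k lam ∧ (∀ p : Fin m, p.val = 0 → 2 ^ k ∈ lam p) ∧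
    ∀ k' < k, ∀ i ∈ Finset.Icc 1 (2 ^ k'), ∀ j ∈ Finset.Icc 1 (2 ^ k'),
      (∃ α, 2 ^ k + 1 - i ∈ lam α ∧ 2 ^ k + 1 - j ∈ lam α) →
        ∃ β, 2 ^ k + 1 - (i + 2 ^ k') ∈ lam β ∧ 2 ^ k + 1 - (j + 2 ^ k') ∈ lam β

/-- Number of nonempty entries of a vector of sets. -/
def nne {n : ℕ} (Pi : Fin n → Finset ℕ) : ℕ :=
  (Finset.univ.filter (fun q => Pi q ≠ ∅)).card

/-- `succ(P) = {P ∪ (P·g)↑ : g}`. -/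
def succSet {n : ℕ} (P : Fin n → Finset ℕ) : Finset (Fin n → Finset ℕ) :=
  (Finset.univ : Finset (Fin n → Fin n)).image (fun g => vUnion P (vUp (dotAct P g)))

/-- The graded set `U_{m,n}^{(k)}` of U-pairs. -/
def Uset (m n : ℕ) : ℕ → Set ((Fin m → Finset ℕ) × (Fin n → Finset ℕ))
  | 0 => {x | x = (fun p => if p.val = 0 then {1} else ∅,
                   fun q => if q.val = 0 then {1} else ∅)}
  | k + 1 => {x | ∃ L P, (L, P) ∈ Uset m n k ∧ ∃ (f : Fin m → Fin m) (g : Fin n → Fin n),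
      x = (vUnion (dotAct L f) (vUp L), vUnion P (vUp (dotAct P g)))}

/-- The `r`-Stirling number: partitions of `{1,…,a}` into `b` nonempty blocks
with `1,…,r` in pairwise distinct blocks. -/
noncomputable def rStirling (a b r : ℕ) : ℕ :=
  Set.ncard {C : Finset (Finset ℕ) |
    C.card = b ∧ (∅ ∉ C) ∧
    (∀ B ∈ C, ∀ B' ∈ C, B ≠ B' → Disjoint B B') ∧
    C.sup id = Finset.Icc 1 a ∧
    ∀ x ∈ Finset.Icc 1 r, ∀ y ∈ Finset.Icc 1 r, x ≠ y →
      ∀ B ∈ C, x ∈ B → y ∉ B}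

/-- The Stirling number of the second kind: the number of partitions of an
`a`-element set into `b` nonempty blocks. -/
noncomputable def stirling2 (a b : ℕ) : ℕ := rStirling a b 0

/-- The entry `s_n^{(i,j)}` (with `1 ≤ i,j ≤ n`). -/
noncomputable def sEntry (n i j : ℕ) : ℕ :=
  if i ≤ j then
    (j - i).factorial * Nat.choose (n - i) (j - i) *
      ∑ α ∈ Finset.Icc (j - i) i, Nat.choose i α * i ^ (i - α) * stirling2 α (j - i)
  else 0

/-- The matrix `S_n`, with rows and columns indexed by `{1,…,n}`. -/
noncomputable def Smat (n : ℕ) : Matrix (Fin n) (Fin n) ℕ :=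
  fun i j => sEntry n (i.val + 1) (j.val + 1)

/-- One step of the shuffle-automaton action on subsets of the grid. -/
def stepE {m n : ℕ} (E : Finset (Fin m × Fin n)) (f : Fin m → Fin m) (g : Fin n → Fin n) :
    Finset (Fin m × Fin n) :=
  E.image (fun p => (f p.1, p.2)) ∪ E.image (fun p => (p.1, g p.2))

/-- Reachability from `{(0,0)}` by finitely many steps. -/
def Reach {m n : ℕ} (hm : 0 < m) (hn : 0 < n) (E : Finset (Fin m × Fin n)) : Prop :=
  Relation.ReflTransGen (fun E1 E2 => ∃ f g, E2 = stepE E1 f g)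
    {(⟨0, hm⟩, ⟨0, hn⟩)} E

/-- Reachability from `{(0,0)}` in at most `t` steps. -/
def ReachIn {m n : ℕ} (hm : 0 < m) (hn : 0 < n) :
    ℕ → Finset (Fin m × Fin n) → Prop
  | 0, E => E = {(⟨0, hm⟩, ⟨0, hn⟩)}
  | t + 1, E => ReachIn hm hn t E ∨
      ∃ E' f g, ReachIn hm hn t E' ∧ E = stepE E' f g

/-- `s(Λ,P) = {(i,j) : λ_i ∩ ρ_j ≠ ∅}`. -/
def sTab {m n : ℕ} (L : Fin m → Finset ℕ) (P : Fin n → Finset ℕ) :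
    Finset (Fin m × Fin n) :=
  Finset.univ.filter (fun p => (L p.1 ∩ P p.2).Nonempty)


/-!
Let `S` be the set of nonempty entries of `P`, so `#S = i`. Because the entries of `P` partition
`{1,…,2^k}`, the vector `P ∪ (P·g)↑` determines `g` on `S`, and its nonempty entries are
`S ∪ g(S)`; so one counts the maps `h : S → Fin n` with `#(S ∪ h(S)) = j`.

Label the points `1,…,i` of `{1,…,2i}` by the elements of `S` and the points `i+1,…,2i` by their
images under `h`. The fibres of this labelling form a partition of `{1,…,2i}` into `j` blocks
separating `1,…,i`, and `h` is recovered from the partition together with the labels of the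
`j - i` blocks that avoid `{1,…,i}`; these labels are distinct and outside `S`, which leaves
`(n-i)!/(n-j)!` choices.
-/

section SeparatingPartition

variable {γ : Type*} [DecidableEq γ]

structure IsSeparatingPartition (X A : Finset γ) (C : Finset (Finset γ)) : Prop where
  empty_notMem : ∅ ∉ C
  disjoint : ∀ B ∈ C, ∀ B' ∈ C, B ≠ B' → Disjoint B B'
  sup_eq : C.sup id = X
  separating : ∀ x ∈ A, ∀ y ∈ A, x ≠ y → ∀ B ∈ C, x ∈ B → y ∉ B

open scoped Classical in
noncomputable def separatingPartitions (X A : Finset γ) (b : ℕ) : Finset (Finset (Finset γ)) :=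
  X.powerset.powerset.filter fun C => #C = b ∧ IsSeparatingPartition X A C

theorem mem_separatingPartitions {X A : Finset γ} {b : ℕ} {C : Finset (Finset γ)} :
    C ∈ separatingPartitions X A b ↔ #C = b ∧ IsSeparatingPartition X A C := by
  classical
  rw [separatingPartitions, mem_filter, and_iff_right_iff_imp, mem_powerset]
  rintro ⟨-, hC⟩ B hB
  rw [mem_powerset, ← hC.sup_eq]
  exact le_sup (f := id) hB

theorem rStirling_eq_card_separatingPartitions (a b r : ℕ) :
    rStirling a b r = #(separatingPartitions (Icc 1 a) (Icc 1 r) b) := by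
  rw [← Set.ncard_coe_finset, rStirling]
  congr 1
  ext C
  rw [mem_coe, mem_separatingPartitions]
  exact and_congr_right fun _ =>
    ⟨fun ⟨h₁, h₂, h₃, h₄⟩ => ⟨h₁, h₂, h₃, h₄⟩, fun ⟨h₁, h₂, h₃, h₄⟩ => ⟨h₁, h₂, h₃, h₄⟩⟩

def blockOf (C : Finset (Finset γ)) (x : γ) : Finset γ :=
  (C.filter (x ∈ ·)).sup id

namespace IsSeparatingPartition

variable {X A : Finset γ} {C : Finset (Finset γ)} (hC : IsSeparatingPartition X A C)
include hC

theorem subset {B : Finset γ} (hB : B ∈ C) : B ⊆ X := by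
  rw [← hC.sup_eq]; exact le_sup (f := id) hB

theorem nonempty {B : Finset γ} (hB : B ∈ C) : B.Nonempty :=
  nonempty_iff_ne_empty.mpr fun h => hC.empty_notMem (h ▸ hB)

theorem eq_of_mem {B B' : Finset γ} (hB : B ∈ C) (hB' : B' ∈ C) {x : γ} (hxB : x ∈ B)
    (hxB' : x ∈ B') : B = B' := by
  by_contra hne
  exact disjoint_left.mp (hC.disjoint B hB B' hB' hne) hxB hxB'

theorem eq_of_mem_of_mem {x y : γ} (hx : x ∈ A) (hy : y ∈ A) {B : Finset γ} (hB : B ∈ C)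
    (hxB : x ∈ B) (hyB : y ∈ B) : x = y := by
  by_contra hne
  exact hC.separating x hx y hy hne B hB hxB hyB

theorem blockOf_eq {B : Finset γ} (hB : B ∈ C) {x : γ} (hx : x ∈ B) : blockOf C x = B := by
  have : C.filter (x ∈ ·) = {B} := by
    ext B'
    simp only [mem_filter, mem_singleton]
    exact ⟨fun h => hC.eq_of_mem h.1 hB h.2 hx, by rintro rfl; exact ⟨hB, hx⟩⟩
  rw [blockOf, this, sup_singleton, id]

theorem exists_mem_of_mem {x : γ} (hx : x ∈ X) : ∃ B ∈ C, x ∈ B := by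
  rw [← hC.sup_eq] at hx
  simpa using mem_sup.mp hx

theorem blockOf_mem {x : γ} (hx : x ∈ X) : blockOf C x ∈ C := by
  obtain ⟨B, hB, hxB⟩ := hC.exists_mem_of_mem hx
  rwa [hC.blockOf_eq hB hxB]

theorem mem_blockOf {x : γ} (hx : x ∈ X) : x ∈ blockOf C x := by
  obtain ⟨B, hB, hxB⟩ := hC.exists_mem_of_mem hx
  rwa [hC.blockOf_eq hB hxB]

theorem filter_blockOf_eq {x : γ} (hx : x ∈ X) :
    X.filter (blockOf C · = blockOf C x) = blockOf C x := by
  ext y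
  rw [mem_filter]
  refine ⟨fun h => h.2 ▸ hC.mem_blockOf h.1, fun hy => ⟨hC.subset (hC.blockOf_mem hx) hy, ?_⟩⟩
  exact hC.blockOf_eq (hC.blockOf_mem hx) hy

theorem injOn_blockOf (hAX : A ⊆ X) : Set.InjOn (blockOf C) A := by
  intro x hx y hy hxy
  exact hC.eq_of_mem_of_mem hx hy (hC.blockOf_mem (hAX hx)) (hC.mem_blockOf (hAX hx))
    (hxy ▸ hC.mem_blockOf (hAX hy))

/-- Blocks meeting `A` are the blocks of the points of `A`; there are `#A` of them. -/
theorem card_filter_disjoint (hAX : A ⊆ X) : #(C.filter (Disjoint A)) = #C - #A := by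
  have hmeet : C.filter (¬ Disjoint A ·) = A.image (blockOf C) := by
    ext B
    simp only [mem_filter, not_disjoint_iff, mem_image]
    constructor
    · rintro ⟨hB, x, hxA, hxB⟩
      exact ⟨x, hxA, hC.blockOf_eq hB hxB⟩
    · rintro ⟨x, hxA, rfl⟩
      exact ⟨hC.blockOf_mem (hAX hxA), x, hxA, hC.mem_blockOf (hAX hxA)⟩
  have hcard := card_filter_add_card_filter_not (s := C) (Disjoint A)
  rw [hmeet, card_image_of_injOn (hC.injOn_blockOf hAX)] at hcard
  omega

end IsSeparatingPartition

end SeparatingPartition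

section KerPartition

variable {γ β : Type*} [DecidableEq γ] [DecidableEq β] (X : Finset γ) (Ψ : γ → β)

def kerPartition : Finset (Finset γ) :=
  (X.image Ψ).image fun b => X.filter (Ψ · = b)

variable {X Ψ}

theorem mem_kerPartition {B : Finset γ} :
    B ∈ kerPartition X Ψ ↔ ∃ x ∈ X, X.filter (Ψ · = Ψ x) = B := by
  simp [kerPartition]

theorem card_kerPartition : #(kerPartition X Ψ) = #(X.image Ψ) := by
  refine card_image_of_injOn fun b hb b' _ h => ?_
  obtain ⟨x, hx, rfl⟩ := mem_image.mp hb
  have : x ∈ X.filter (Ψ · = b') := by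
    rw [← (h : X.filter (Ψ · = Ψ x) = _)]; exact mem_filter.mpr ⟨hx, rfl⟩
  exact (mem_filter.mp this).2

theorem isSeparatingPartition_kerPartition {A : Finset γ} (hΨ : Set.InjOn Ψ A) :
    IsSeparatingPartition X A (kerPartition X Ψ) := by
  refine ⟨fun h => ?_, ?_, ?_, ?_⟩
  · obtain ⟨x, hx, hB⟩ := mem_kerPartition.mp h
    exact (eq_empty_iff_forall_notMem.mp hB) x (mem_filter.mpr ⟨hx, rfl⟩)
  · intro B hB B' hB' hne
    obtain ⟨x, -, rfl⟩ := mem_kerPartition.mp hB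
    obtain ⟨x', -, rfl⟩ := mem_kerPartition.mp hB'
    refine disjoint_filter.mpr fun y _ hy hy' => hne ?_
    rw [← hy, ← hy']
  · ext y
    simp only [mem_sup, id, mem_kerPartition]
    refine ⟨fun ⟨B, ⟨x, _, hB⟩, hy⟩ => (mem_filter.mp (hB ▸ hy)).1, fun hy => ?_⟩
    exact ⟨_, ⟨y, hy, rfl⟩, mem_filter.mpr ⟨hy, rfl⟩⟩
  · intro x hx y hy hne B hB hxB hyB
    obtain ⟨z, -, rfl⟩ := mem_kerPartition.mp hB
    exact hne (hΨ hx hy ((mem_filter.mp hxB).2.trans (mem_filter.mp hyB).2.symm))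

theorem apply_eq_of_mem_kerPartition {B : Finset γ} (hB : B ∈ kerPartition X Ψ) {x y : γ}
    (hx : x ∈ B) (hy : y ∈ B) : Ψ x = Ψ y := by
  obtain ⟨z, -, rfl⟩ := mem_kerPartition.mp hB
  exact (mem_filter.mp hx).2.trans (mem_filter.mp hy).2.symm

theorem exists_mem_kerPartition_of_apply_eq {x y : γ} (hx : x ∈ X) (hy : y ∈ X)
    (h : Ψ x = Ψ y) : ∃ B ∈ kerPartition X Ψ, x ∈ B ∧ y ∈ B :=
  ⟨_, mem_kerPartition.mpr ⟨x, hx, rfl⟩, mem_filter.mpr ⟨hx, rfl⟩, mem_filter.mpr ⟨hy, h.symm⟩⟩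

theorem kerPartition_eq {A : Finset γ} {C : Finset (Finset γ)} (hC : IsSeparatingPartition X A C)
    {v : Finset γ → β} (hv : Set.InjOn v C) (hΨ : ∀ x ∈ X, Ψ x = v (blockOf C x)) :
    kerPartition X Ψ = C := by
  have hfiber : ∀ x ∈ X, X.filter (Ψ · = Ψ x) = blockOf C x := by
    intro x hx
    rw [← hC.filter_blockOf_eq hx]
    refine filter_congr fun y hy => ?_
    rw [hΨ x hx, hΨ y hy]
    exact hv.eq_iff (hC.blockOf_mem hy) (hC.blockOf_mem hx)
  ext B
  rw [mem_kerPartition]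
  constructor
  · rintro ⟨x, hx, rfl⟩
    exact hfiber x hx ▸ hC.blockOf_mem hx
  · intro hB
    obtain ⟨x, hxB⟩ := hC.nonempty hB
    have hx := hC.subset hB hxB
    exact ⟨x, hx, (hfiber x hx).trans (hC.blockOf_eq hB hxB)⟩

end KerPartition

namespace Finset

variable {α : Type*} (S : Finset α)

noncomputable def rank (p : S) : ℕ := S.equivFin p + 1

noncomputable def unrank (m : ℕ) : Option S :=
  if hm : m - 1 < #S then some (S.equivFin.symm ⟨m - 1, hm⟩) else none

variable {S}

theorem rank_mem_Icc (p : S) : S.rank p ∈ Icc 1 #S := by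
  have := (S.equivFin p).2
  rw [rank, mem_Icc]; omega

theorem unrank_rank (p : S) : S.unrank (S.rank p) = some p := by
  have := (S.equivFin p).2
  simp [unrank, rank, this]

theorem exists_rank_eq {m : ℕ} (hm : m ∈ Icc 1 #S) : ∃ p, S.rank p = m := by
  rw [mem_Icc] at hm
  exact ⟨S.equivFin.symm ⟨m - 1, by omega⟩, by simp [rank]; omega⟩

theorem rank_mem_Icc_two_mul (p : S) : S.rank p ∈ Icc 1 (2 * #S) := by
  have := mem_Icc.mp (rank_mem_Icc p); rw [mem_Icc]; omega

theorem card_add_rank_mem_Icc (p : S) : #S + S.rank p ∈ Icc 1 (2 * #S) := by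
  have := mem_Icc.mp (rank_mem_Icc p); rw [mem_Icc]; omega

theorem exists_rank_eq_or_card_add_rank_eq {m : ℕ} (hm : m ∈ Icc 1 (2 * #S)) :
    (∃ p, S.rank p = m) ∨ ∃ p, #S + S.rank p = m := by
  rw [mem_Icc] at hm
  by_cases hmS : m ≤ #S
  · exact Or.inl (exists_rank_eq (mem_Icc.mpr ⟨hm.1, hmS⟩))
  · obtain ⟨p, hp⟩ := exists_rank_eq (S := S) (m := m - #S) (mem_Icc.mpr ⟨by omega, by omega⟩)
    exact Or.inr ⟨p, by omega⟩

end Finset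

section Label

variable {α : Type*} (S : Finset α)

/-- The point `m ≤ #S` of `{1,…,2#S}` is labelled by the `m`-th element of `S`, and the point
`#S + m` by its image under `h`; labels are `Option`-valued so that no default element of `α`
is needed off `{1,…,2#S}`. -/
noncomputable def label (h : S → α) (m : ℕ) : Option α :=
  if m ≤ #S then (S.unrank m).map Subtype.val else (S.unrank (m - #S)).map h

variable {S} (h : S → α)

theorem label_rank (p : S) : label S h (S.rank p) = some (p : α) := by
  rw [label, if_pos (mem_Icc.mp (rank_mem_Icc p)).2, unrank_rank, Option.map_some]

theorem label_card_add_rank (p : S) : label S h (#S + S.rank p) = some (h p) := by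
  have := (mem_Icc.mp (rank_mem_Icc p)).1
  rw [label, if_neg (by omega), Nat.add_sub_cancel_left, unrank_rank, Option.map_some]

theorem injOn_label : Set.InjOn (label S h) (Icc 1 #S) := by
  intro m hm m' hm' he
  obtain ⟨p, rfl⟩ := exists_rank_eq hm
  obtain ⟨p', rfl⟩ := exists_rank_eq hm'
  rw [label_rank, label_rank, Option.some_inj] at he
  rw [Subtype.ext he]

variable [DecidableEq α]

theorem image_label : (Icc 1 (2 * #S)).image (label S h) = (S ∪ univ.image h).image some := by
  ext o
  simp only [mem_image, mem_union]
  constructor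
  · rintro ⟨m, hm, rfl⟩
    rcases exists_rank_eq_or_card_add_rank_eq hm with ⟨p, rfl⟩ | ⟨p, rfl⟩
    · exact ⟨p, Or.inl p.2, (label_rank h p).symm⟩
    · exact ⟨h p, Or.inr ⟨p, mem_univ _, rfl⟩, (label_card_add_rank h p).symm⟩
  · rintro ⟨a, ha | ⟨p, -, rfl⟩, rfl⟩
    · exact ⟨_, rank_mem_Icc_two_mul ⟨a, ha⟩, label_rank h ⟨a, ha⟩⟩
    · exact ⟨_, card_add_rank_mem_Icc p, label_card_add_rank h p⟩

theorem kerPartition_label_mem :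
    kerPartition (Icc 1 (2 * #S)) (label S h) ∈
      separatingPartitions (Icc 1 (2 * #S)) (Icc 1 #S) #(S ∪ univ.image h) := by
  rw [mem_separatingPartitions, card_kerPartition, image_label,
    card_image_of_injective _ (Option.some_injective α)]
  exact ⟨rfl, isSeparatingPartition_kerPartition (injOn_label h)⟩

end Label

section Fiber

variable {α : Type*} {S : Finset α} {C : Finset (Finset ℕ)}

variable (S C) in
abbrev freeBlocks : Finset (Finset ℕ) := C.filter (Disjoint (Icc 1 #S))

/-- On blocks meeting `{1,…,#S}` the label is forced by the (unique) point of `S` they contain;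
`φ` assigns labels to the other blocks. -/
noncomputable def blockLabel (φ : freeBlocks S C → α) (B : Finset ℕ) : Option α :=
  if hB : B ∈ freeBlocks S C then some (φ ⟨B, hB⟩)
  else (S.unrank ((Icc 1 #S ∩ B).sup id)).map Subtype.val

noncomputable def ofBlockLabel (φ : freeBlocks S C → α) (p : S) : α :=
  (blockLabel φ (blockOf C (#S + S.rank p))).getD p

variable (hC : IsSeparatingPartition (Icc 1 (2 * #S)) (Icc 1 #S) C)
  (φ : freeBlocks S C → α)
include hC

theorem blockLabel_blockOf_rank (q : S) : blockLabel φ (blockOf C (S.rank q)) = some (q : α) := by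
  have hmem := hC.mem_blockOf (rank_mem_Icc_two_mul q)
  have hinter : Icc 1 #S ∩ blockOf C (S.rank q) = {S.rank q} := by
    refine eq_singleton_iff_unique_mem.mpr ⟨mem_inter.mpr ⟨rank_mem_Icc q, hmem⟩, ?_⟩
    intro m hm
    rw [mem_inter] at hm
    exact hC.eq_of_mem_of_mem hm.1 (rank_mem_Icc q) (hC.blockOf_mem (rank_mem_Icc_two_mul q))
      hm.2 hmem
  have hfree : blockOf C (S.rank q) ∉ freeBlocks S C := fun h =>
    disjoint_left.mp (mem_filter.mp h).2 (rank_mem_Icc q) hmem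
  rw [blockLabel, dif_neg hfree, hinter, sup_singleton, id, unrank_rank, Option.map_some]

theorem exists_blockOf_rank_eq {B : Finset ℕ} (hB : B ∈ C)
    (hfree : B ∉ freeBlocks S C) : ∃ q : S, blockOf C (S.rank q) = B := by
  obtain ⟨m, hmA, hmB⟩ := not_disjoint_iff.mp fun h => hfree (mem_filter.mpr ⟨hB, h⟩)
  obtain ⟨q, rfl⟩ := exists_rank_eq hmA
  exact ⟨q, hC.blockOf_eq hB hmB⟩

theorem exists_card_add_rank_mem {B : Finset ℕ} (hB : B ∈ freeBlocks S C) :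
    ∃ p : S, #S + S.rank p ∈ B := by
  rw [mem_filter] at hB
  obtain ⟨m, hm⟩ := hC.nonempty hB.1
  rcases exists_rank_eq_or_card_add_rank_eq (hC.subset hB.1 hm) with ⟨q, rfl⟩ | ⟨p, rfl⟩
  · exact absurd hm (disjoint_left.mp hB.2 (rank_mem_Icc q))
  · exact ⟨p, hm⟩

theorem exists_blockLabel_eq_some {B : Finset ℕ} (hB : B ∈ C) : ∃ a, blockLabel φ B = some a := by
  by_cases hfree : B ∈ freeBlocks S C
  · exact ⟨_, dif_pos hfree⟩
  · obtain ⟨q, rfl⟩ := exists_blockOf_rank_eq hC hB hfree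
    exact ⟨_, blockLabel_blockOf_rank hC φ q⟩

theorem label_ofBlockLabel {m : ℕ} (hm : m ∈ Icc 1 (2 * #S)) :
    label S (ofBlockLabel φ) m = blockLabel φ (blockOf C m) := by
  rcases exists_rank_eq_or_card_add_rank_eq hm with ⟨q, rfl⟩ | ⟨p, rfl⟩
  · rw [label_rank, blockLabel_blockOf_rank hC]
  · obtain ⟨a, ha⟩ := exists_blockLabel_eq_some hC φ (hC.blockOf_mem hm)
    rw [label_card_add_rank, ofBlockLabel, ha, Option.getD_some]

theorem injOn_blockLabel (hφ : Function.Injective φ) (hφS : ∀ B, φ B ∉ S) :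
    Set.InjOn (blockLabel φ) C := by
  have key : ∀ B ∈ C, ∀ B' ∈ C, blockLabel φ B = blockLabel φ B' →
      B ∈ freeBlocks S C → B = B' := by
    intro B hB B' hB' he hfree
    rw [blockLabel, dif_pos hfree] at he
    by_cases hfree' : B' ∈ freeBlocks S C
    · rw [blockLabel, dif_pos hfree', Option.some_inj] at he
      exact congrArg Subtype.val (hφ he)
    · obtain ⟨q, rfl⟩ := exists_blockOf_rank_eq hC hB' hfree'
      rw [blockLabel_blockOf_rank hC, Option.some_inj] at he
      exact absurd (he ▸ q.2) (hφS _)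
  intro B hB B' hB' he
  by_cases hfree : B ∈ freeBlocks S C
  · exact key B hB B' hB' he hfree
  by_cases hfree' : B' ∈ freeBlocks S C
  · exact (key B' hB' B hB he.symm hfree').symm
  obtain ⟨q, rfl⟩ := exists_blockOf_rank_eq hC hB hfree
  obtain ⟨q', rfl⟩ := exists_blockOf_rank_eq hC hB' hfree'
  rw [blockLabel_blockOf_rank hC, blockLabel_blockOf_rank hC, Option.some_inj] at he
  rw [Subtype.ext he]

theorem ofBlockLabel_injective : Function.Injective (ofBlockLabel (S := S) (C := C)) := by
  intro φ φ' he
  funext ⟨B, hB⟩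
  obtain ⟨p, hp⟩ := exists_card_add_rank_mem hC hB
  have hval : ∀ ψ : freeBlocks S C → α, ofBlockLabel ψ p = ψ ⟨B, hB⟩ := by
    intro ψ
    rw [ofBlockLabel, hC.blockOf_eq (mem_filter.mp hB).1 hp, blockLabel, dif_pos hB,
      Option.getD_some]
  rw [← hval φ, ← hval φ', he]

variable [DecidableEq α]

theorem kerPartition_label_ofBlockLabel (hφ : Function.Injective φ) (hφS : ∀ B, φ B ∉ S) :
    kerPartition (Icc 1 (2 * #S)) (label S (ofBlockLabel φ)) = C :=
  kerPartition_eq hC (injOn_blockLabel hC φ hφ hφS) fun _ hm => label_ofBlockLabel hC φ hm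

theorem exists_ofBlockLabel_eq {h : S → α}
    (hh : kerPartition (Icc 1 (2 * #S)) (label S h) = C) :
    ∃ φ : freeBlocks S C → α,
      Function.Injective φ ∧ (∀ B, φ B ∉ S) ∧ ofBlockLabel φ = h := by
  choose p hp using fun B : freeBlocks S C => exists_card_add_rank_mem hC B.2
  have hsame : ∀ B ∈ C, ∀ m ∈ B, ∀ m' ∈ B, label S h m = label S h m' := fun B hB m hm m' hm' =>
    apply_eq_of_mem_kerPartition (hh ▸ hB) hm hm'
  have hmem : ∀ m ∈ Icc 1 (2 * #S), ∀ m' ∈ Icc 1 (2 * #S), label S h m = label S h m' →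
      ∀ B ∈ C, m' ∈ B → m ∈ B := by
    intro m hm m' hm' he B hB hm'B
    obtain ⟨B', hB', hmB', hm'B'⟩ := exists_mem_kerPartition_of_apply_eq hm hm' he
    rwa [hC.eq_of_mem hB (hh ▸ hB') hm'B hm'B']
  have hlabel : ∀ m ∈ Icc 1 (2 * #S),
      label S h m = blockLabel (fun B => h (p B)) (blockOf C m) := by
    intro m hm
    have hB := hC.blockOf_mem hm
    by_cases hfree : blockOf C m ∈ freeBlocks S C
    · rw [blockLabel, dif_pos hfree, ← label_card_add_rank]
      exact hsame _ hB _ (hC.mem_blockOf hm) _ (hp _)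
    · obtain ⟨q, hq⟩ := exists_blockOf_rank_eq hC hB hfree
      rw [← hq, blockLabel_blockOf_rank hC, ← label_rank h q]
      exact hsame _ hB _ (hC.mem_blockOf hm) _ (hq ▸ hC.mem_blockOf (rank_mem_Icc_two_mul q))
  refine ⟨fun B => h (p B), fun B B' he => ?_, fun B hBS => ?_, funext fun p' => ?_⟩
  · have hm := hmem _ (card_add_rank_mem_Icc (p B)) _ (card_add_rank_mem_Icc (p B'))
      (by rw [label_card_add_rank, label_card_add_rank]; exact congrArg some he)
      _ (mem_filter.mp B'.2).1 (hp B')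
    exact Subtype.ext (hC.eq_of_mem (mem_filter.mp B.2).1 (mem_filter.mp B'.2).1 (hp B) hm)
  · have hm := hmem _ (rank_mem_Icc_two_mul ⟨_, hBS⟩) _ (card_add_rank_mem_Icc (p B))
      (by rw [label_rank, label_card_add_rank]) _ (mem_filter.mp B.2).1 (hp B)
    exact disjoint_left.mp (mem_filter.mp B.2).2 (rank_mem_Icc _) hm
  · rw [ofBlockLabel, ← hlabel _ (card_add_rank_mem_Icc p'), label_card_add_rank, Option.getD_some]

end Fiber

section Count

variable {α : Type*} [Fintype α] [DecidableEq α]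

theorem card_filter_kerPartition_label_eq {S : Finset α} {C : Finset (Finset ℕ)}
    (hC : IsSeparatingPartition (Icc 1 (2 * #S)) (Icc 1 #S) C) :
    #(univ.filter fun h : S → α => kerPartition (Icc 1 (2 * #S)) (label S h) = C) =
      (Fintype.card α - #S).descFactorial (#C - #S) := by
  have hAX : Icc 1 #S ⊆ Icc 1 (2 * #S) := Icc_subset_Icc_right (by omega)
  have hfree : #(freeBlocks S C) = #C - #S := by
    rw [hC.card_filter_disjoint hAX, Nat.card_Icc, Nat.add_sub_cancel]
  have hemb : #(univ : Finset (freeBlocks S C ↪ (Sᶜ : Finset α))) =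
      (#Sᶜ).descFactorial #(freeBlocks S C) := by
    rw [card_univ, Fintype.card_embedding_eq, Fintype.card_coe, Fintype.card_coe]
  rw [← hfree, ← card_compl, ← hemb]
  symm
  refine card_bij (fun φ _ => ofBlockLabel fun B => (φ B : α)) (fun φ _ => ?_)
    (fun φ _ φ' _ he => ?_) (fun h hh => ?_)
  · exact mem_filter.mpr ⟨mem_univ _, kerPartition_label_ofBlockLabel hC _
      (fun B B' he => φ.injective (Subtype.ext he)) fun B => mem_compl.mp (φ B).2⟩
  · exact DFunLike.coe_injective (funext fun B =>
      Subtype.ext (congrFun (ofBlockLabel_injective hC he) B))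
  · obtain ⟨φ, hφ, hφS, rfl⟩ := exists_ofBlockLabel_eq hC (mem_filter.mp hh).2
    exact ⟨⟨fun B => ⟨φ B, mem_compl.mpr (hφS B)⟩, fun B B' he => hφ (congrArg Subtype.val he)⟩,
      mem_univ _, rfl⟩

theorem card_filter_card_union_image_eq (S : Finset α) (j : ℕ) :
    #(univ.filter fun h : S → α => #(S ∪ univ.image h) = j) =
      rStirling (2 * #S) j #S * (Fintype.card α - #S).descFactorial (j - #S) := by
  rw [rStirling_eq_card_separatingPartitions, card_eq_sum_card_fiberwise
    (f := fun h => kerPartition (Icc 1 (2 * #S)) (label S h)) fun h hh => ?_]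
  · refine sum_const_nat fun C hC => ?_
    obtain ⟨rfl, hCsep⟩ := mem_separatingPartitions.mp hC
    rw [← card_filter_kerPartition_label_eq hCsep, filter_filter]
    congr 1
    refine filter_congr fun h _ => and_iff_right_of_imp fun hh => ?_
    exact (mem_separatingPartitions.mp (hh ▸ kerPartition_label_mem h)).1.symm
  · exact (mem_filter.mp hh).2 ▸ kerPartition_label_mem h

end Count

namespace Finset

variable {α : Type*} [DecidableEq α] (S : Finset α)

def extendId (h : S → α) (p : α) : α := if hp : p ∈ S then h ⟨p, hp⟩ else p

variable {S}

theorem extendId_of_mem {p : α} (hp : p ∈ S) (h : S → α) : S.extendId h p = h ⟨p, hp⟩ :=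
  dif_pos hp

theorem image_extendId (h : S → α) : S.image (S.extendId h) = univ.image h := by
  ext q
  simp only [mem_image, mem_univ, true_and, Subtype.exists]
  exact exists_congr fun p => ⟨fun ⟨hp, he⟩ => ⟨hp, by rwa [extendId_of_mem hp] at he⟩,
    fun ⟨hp, he⟩ => ⟨hp, by rwa [extendId_of_mem hp]⟩⟩

end Finset

section Succ

variable {n k : ℕ} {P : Fin n → Finset ℕ}

def succVec (P : Fin n → Finset ℕ) (g : Fin n → Fin n) : Fin n → Finset ℕ :=
  vUnion P (vUp (dotAct P g))

theorem succSet_eq_image_succVec (P : Fin n → Finset ℕ) : succSet P = univ.image (succVec P) :=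
  rfl

def support (P : Fin n → Finset ℕ) : Finset (Fin n) := univ.filter (P · ≠ ∅)

theorem mem_dotAct {g : Fin n → Fin n} {q : Fin n} {x : ℕ} :
    x ∈ dotAct P g q ↔ ∃ p, g p = q ∧ x ∈ P p := by
  simp [dotAct]

theorem sup_dotAct (g : Fin n → Fin n) : univ.sup (dotAct P g) = univ.sup P := by
  ext x
  simp only [mem_sup, mem_univ, true_and, mem_dotAct]
  exact ⟨fun ⟨_, p, _, hx⟩ => ⟨p, hx⟩, fun ⟨p, hx⟩ => ⟨g p, p, rfl, hx⟩⟩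

variable (hP : IsEXP k P)
include hP

theorem IsEXP.mem_Icc_of_mem {p : Fin n} {x : ℕ} (hx : x ∈ P p) : x ∈ Icc 1 (2 ^ k) :=
  hP.2 ▸ mem_sup.mpr ⟨p, mem_univ p, hx⟩

theorem vMax_dotAct (g : Fin n → Fin n) : vMax (dotAct P g) = 2 ^ k := by
  rw [vMax, sup_dotAct, hP.2]
  exact le_antisymm (Finset.sup_le fun x hx => (mem_Icc.mp hx).2)
    (le_sup (f := id) (mem_Icc.mpr ⟨Nat.one_le_two_pow, le_rfl⟩))

theorem mem_succVec {g : Fin n → Fin n} {q : Fin n} {x : ℕ} :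
    x ∈ succVec P g q ↔ x ∈ P q ∨ ∃ p, g p = q ∧ ∃ y ∈ P p, y + 2 ^ k = x := by
  simp only [succVec, vUnion, vUp, mem_union, mem_image, vMax_dotAct hP, mem_dotAct]
  aesop

theorem nne_succVec (g : Fin n → Fin n) :
    nne (succVec P g) = #(support P ∪ (support P).image g) := by
  rw [nne]
  congr 1
  ext q
  simp only [support, mem_filter, mem_univ, true_and, mem_union, mem_image,
    ← nonempty_iff_ne_empty]
  constructor
  · rintro ⟨x, hx⟩
    rcases (mem_succVec hP).mp hx with h | ⟨p, hp, y, hy, -⟩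
    · exact Or.inl ⟨x, h⟩
    · exact Or.inr ⟨p, ⟨y, hy⟩, hp⟩
  · rintro (⟨x, hx⟩ | ⟨p, ⟨y, hy⟩, rfl⟩)
    · exact ⟨x, (mem_succVec hP).mpr (Or.inl hx)⟩
    · exact ⟨y + 2 ^ k, (mem_succVec hP).mpr (Or.inr ⟨p, rfl, y, hy, rfl⟩)⟩

/-- The shifted copy `x + 2 ^ k` of a point `x ∈ P p` lands in entry `g p` and nowhere else. -/
theorem succVec_eq_succVec_iff {g g' : Fin n → Fin n} :
    succVec P g = succVec P g' ↔ ∀ p ∈ support P, g p = g' p := by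
  constructor
  · intro he p hp
    obtain ⟨x, hx⟩ := nonempty_iff_ne_empty.mpr (mem_filter.mp hp).2
    have h1 : x + 2 ^ k ∈ succVec P g' (g p) :=
      he ▸ (mem_succVec hP).mpr (Or.inr ⟨p, rfl, x, hx, rfl⟩)
    rcases (mem_succVec hP).mp h1 with h | ⟨p', hp', y, hy, hyx⟩
    · have := mem_Icc.mp (hP.mem_Icc_of_mem h)
      have := mem_Icc.mp (hP.mem_Icc_of_mem hx)
      omega
    · obtain rfl : y = x := by omega
      by_contra hne
      have hpp' : p ≠ p' := by rintro rfl; exact hne hp'.symm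
      exact disjoint_left.mp (hP.1 p p' hpp') hx hy
  · intro he
    funext q
    ext x
    have hsupp : ∀ p, ∀ y ∈ P p, p ∈ support P := fun p y hy =>
      mem_filter.mpr ⟨mem_univ p, ne_empty_of_mem hy⟩
    simp only [mem_succVec hP]
    constructor <;> rintro (h | ⟨p, rfl, y, hy, rfl⟩)
    · exact Or.inl h
    · exact Or.inr ⟨p, (he p (hsupp p y hy)).symm, y, hy, rfl⟩
    · exact Or.inl h
    · exact Or.inr ⟨p, he p (hsupp p y hy), y, hy, rfl⟩

theorem card_filter_succSet (j : ℕ) :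
    #((succSet P).filter (nne · = j)) =
      #(univ.filter fun h : support P → Fin n => #(support P ∪ univ.image h) = j) := by
  have hext (g : Fin n → Fin n) : succVec P ((support P).extendId fun p => g p) = succVec P g :=
    (succVec_eq_succVec_iff hP).mpr fun p hp => extendId_of_mem hp _
  have hfilter : (succSet P).filter (nne · = j) =
      (univ.filter fun h : support P → Fin n => #(support P ∪ univ.image h) = j).image
        fun h => succVec P ((support P).extendId h) := by
    ext Q
    simp only [succSet_eq_image_succVec, mem_filter, mem_image, mem_univ, true_and,
      ← image_extendId]
    constructor
    · rintro ⟨⟨g, rfl⟩, hj⟩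
      exact ⟨fun p => g p, by rwa [← hext g, nne_succVec hP] at hj, hext g⟩
    · rintro ⟨h, hj, rfl⟩
      exact ⟨⟨_, rfl⟩, by rwa [nne_succVec hP]⟩
  rw [hfilter, card_image_of_injective]
  intro h h' he
  funext p
  have := (succVec_eq_succVec_iff hP).mp he p p.2
  rwa [extendId_of_mem p.2, extendId_of_mem p.2] at this

end Succ

theorem stmt11_general (n k i j : ℕ) (hij : i ≤ j) (hjn : j ≤ n)
    (P : Fin n → Finset ℕ) (hP : IsRvalid k P) (hc : nne P = i) :
    ((succSet P).filter (fun Q => nne Q = j)).card =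
      ((n - i).factorial / (n - j).factorial) * rStirling (2 * i) j i := by
  have hS : #(support P) = i := hc
  rw [card_filter_succSet hP.1, card_filter_card_union_image_eq, hS, Fintype.card_fin,
    Nat.descFactorial_eq_div (by omega), show n - i - (j - i) = n - j by omega, mul_comm]

theorem stmt11 (n k i j : ℕ) (hn : 1 ≤ n) (hi1 : 1 ≤ i) (hij : i ≤ j) (hjn : j ≤ n)
    (P : Fin n → Finset ℕ) (hP : IsRvalid k P) (hc : nne P = i) :
    ((succSet P).filter (fun Q => nne Q = j)).card =
      ((n - i).factorial / (n - j).factorial) * rStirling (2 * i) j i :=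
  stmt11_general n k i j hij hjn P hP hc
end

section
/- For all k ≥ 0, the number of k-Rvalid vectors of size 2 equals (4^k + 2)/3; equivalently, 3 times the number of k-Rvalid vectors of size 2 equals 4^k + 2. -/
open Finset

/-!
A valid vector of size 2 is determined by its second entry `A`, and validity says that `1 ∉ A`
and that, at each level `k'`, whether `i + 2 ^ k'` lies in `A` depends only on whether `i` does.
So a valid set at level `k + 1` is a valid set `A'` at level `k` together with a map
`φ : Bool → Bool` prescribing the upper half. Distinct maps give distinct sets unless `A' = ∅`,
where only `φ false` matters; so the number `N k` of valid sets satisfies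
`N (k + 1) = 4 N k - 2` and `N 0 = 1`.
-/

def IsRvalidSet (k : ℕ) (A : Finset ℕ) : Prop :=
  1 ∉ A ∧ ∀ k' < k, ∀ i ∈ Icc 1 (2 ^ k'), ∀ j ∈ Icc 1 (2 ^ k'),
    (i ∈ A ↔ j ∈ A) → (i + 2 ^ k' ∈ A ↔ j + 2 ^ k' ∈ A)

open Classical in
noncomputable def rvalidSets (k : ℕ) : Finset (Finset ℕ) :=
  (Icc 1 (2 ^ k)).powerset.filter (IsRvalidSet k)

lemma two_pow_add_two_pow_le {k' k : ℕ} (h : k' < k) : 2 ^ k' + 2 ^ k' ≤ 2 ^ k := by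
  rw [← two_mul, ← pow_succ']
  exact Nat.pow_le_pow_right two_pos h

lemma one_mem_Icc_two_pow (k : ℕ) : 1 ∈ Icc 1 (2 ^ k) :=
  mem_Icc.2 ⟨le_rfl, Nat.one_le_two_pow⟩

lemma mem_rvalidSets {k : ℕ} {A : Finset ℕ} :
    A ∈ rvalidSets k ↔ A ⊆ Icc 1 (2 ^ k) ∧ IsRvalidSet k A := by
  simp [rvalidSets]

lemma isEXP_fin_two_iff {k : ℕ} {ρ : Fin 2 → Finset ℕ} :
    IsEXP k ρ ↔ ρ 1 ⊆ Icc 1 (2 ^ k) ∧ ρ 0 = Icc 1 (2 ^ k) \ ρ 1 := by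
  have hsup : univ.sup ρ = ρ 0 ∪ ρ 1 := by simp [Fin.univ_succ, sup_insert]
  simp only [IsEXP, Fin.forall_fin_two, hsup, ne_eq, not_true_eq_false, Fin.isValue,
    IsEmpty.forall_iff, true_and, and_true]
  constructor
  · rintro ⟨⟨h01, -⟩, hunion⟩
    rw [← hunion]
    exact ⟨subset_union_right, (union_sdiff_cancel_right (h01 (by decide))).symm⟩
  · rintro ⟨hsub, h0⟩
    rw [h0, sdiff_union_of_subset hsub]
    exact ⟨⟨fun _ => sdiff_disjoint, fun _ => disjoint_sdiff⟩, rfl⟩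

lemma exists_mem_pair_iff {S A : Finset ℕ} {x y : ℕ} (hx : x ∈ S) (hy : y ∈ S) :
    (∃ α, x ∈ ![S \ A, A] α ∧ y ∈ ![S \ A, A] α) ↔ (x ∈ A ↔ y ∈ A) := by
  simp only [Fin.exists_fin_two, Matrix.cons_val_zero, Matrix.cons_val_one, mem_sdiff, hx, hy,
    true_and]
  tauto

lemma isRvalid_pair_iff {k : ℕ} {A : Finset ℕ} :
    IsRvalid k ![Icc 1 (2 ^ k) \ A, A] ↔ A ∈ rvalidSets k := by
  rw [IsRvalid, isEXP_fin_two_iff, mem_rvalidSets, IsRvalidSet]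
  simp only [Fin.forall_fin_two, Matrix.cons_val_zero, Matrix.cons_val_one, mem_sdiff,
    one_mem_Icc_two_pow, true_and, and_true, Fin.val_zero, Fin.val_one, one_ne_zero, IsEmpty.forall_iff, forall_const]
  refine and_congr_right fun _ => and_congr_right fun _ => ?_
  refine forall₂_congr fun k' hk' => forall₂_congr fun i hi => forall₂_congr fun j hj => ?_
  have hk := two_pow_add_two_pow_le hk'
  simp only [mem_Icc] at hi hj
  rw [exists_mem_pair_iff (mem_Icc.2 ⟨by omega, by omega⟩) (mem_Icc.2 ⟨by omega, by omega⟩),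
    exists_mem_pair_iff (mem_Icc.2 ⟨by omega, by omega⟩) (mem_Icc.2 ⟨by omega, by omega⟩)]

lemma setOf_isRvalid_fin_two (k : ℕ) :
    {ρ : Fin 2 → Finset ℕ | IsRvalid k ρ} =
      (rvalidSets k).image (fun A => ![Icc 1 (2 ^ k) \ A, A]) := by
  ext ρ
  simp only [Set.mem_ofPred_eq, coe_image, Set.mem_image, mem_coe]
  constructor
  · intro h
    have hρ : ρ = ![Icc 1 (2 ^ k) \ ρ 1, ρ 1] := by
      ext1 p; fin_cases p
      · exact isEXP_fin_two_iff.1 h.1 |>.2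
      · rfl
    rw [hρ] at h
    exact ⟨ρ 1, isRvalid_pair_iff.1 h, hρ.symm⟩
  · rintro ⟨A, hA, rfl⟩
    exact isRvalid_pair_iff.2 hA

section Doubling

variable {k : ℕ} {A B : Finset ℕ}

lemma isRvalidSet_congr (h : ∀ x ≤ 2 ^ k, x ∈ A ↔ x ∈ B) :
    IsRvalidSet k A ↔ IsRvalidSet k B := by
  refine and_congr (not_congr (h 1 Nat.one_le_two_pow)) ?_
  refine forall₂_congr fun k' hk' => forall₂_congr fun i hi => forall₂_congr fun j hj => ?_
  have hk := two_pow_add_two_pow_le hk'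
  simp only [mem_Icc] at hi hj
  rw [h i (by omega), h j (by omega), h (i + 2 ^ k') (by omega), h (j + 2 ^ k') (by omega)]

lemma isRvalidSet_succ_iff :
    IsRvalidSet (k + 1) A ↔ IsRvalidSet k A ∧ ∀ i ∈ Icc 1 (2 ^ k), ∀ j ∈ Icc 1 (2 ^ k),
      (i ∈ A ↔ j ∈ A) → (i + 2 ^ k ∈ A ↔ j + 2 ^ k ∈ A) := by
  rw [IsRvalidSet, IsRvalidSet, Nat.forall_lt_succ_right, and_assoc]

lemma exists_bool_factor {α : Type*} {S : Set α} {p q : α → Prop} [DecidablePred p]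
    (h : ∀ x ∈ S, ∀ y ∈ S, (p x ↔ p y) → (q x ↔ q y)) :
    ∃ φ : Bool → Bool, ∀ x ∈ S, q x ↔ φ (decide (p x)) := by
  classical
  refine ⟨fun b => decide (∃ y ∈ S, decide (p y) = b ∧ q y), fun x hx => ?_⟩
  simp only [decide_eq_decide, decide_eq_true_eq]
  exact ⟨fun hq => ⟨x, hx, Iff.rfl, hq⟩, fun ⟨y, hy, hpy, hqy⟩ => (h x hx y hy hpy.symm).2 hqy⟩

def doubling (k : ℕ) (A : Finset ℕ) (φ : Bool → Bool) : Finset ℕ :=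
  A ∪ ((Icc 1 (2 ^ k)).filter fun x => φ (decide (x ∈ A))).map (addRightEmbedding (2 ^ k))

variable {φ : Bool → Bool} {x : ℕ}

lemma mem_doubling_of_le (hx : x ≤ 2 ^ k) : x ∈ doubling k A φ ↔ x ∈ A := by
  simp only [doubling, mem_union, mem_map, mem_filter, mem_Icc, addRightEmbedding_apply,
    or_iff_left_iff_imp]
  rintro ⟨y, ⟨⟨hy, -⟩, -⟩, rfl⟩
  omega

lemma add_mem_doubling (hA : A ⊆ Icc 1 (2 ^ k)) (hx : x ∈ Icc 1 (2 ^ k)) :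
    x + 2 ^ k ∈ doubling k A φ ↔ φ (decide (x ∈ A)) := by
  have hnot : x + 2 ^ k ∉ A := fun h => by
    have := mem_Icc.1 (hA h); have := mem_Icc.1 hx; omega
  rw [doubling, mem_union, ← addRightEmbedding_apply, mem_map', mem_filter]
  simp [hnot, hx]

lemma doubling_subset (hA : A ⊆ Icc 1 (2 ^ k)) : doubling k A φ ⊆ Icc 1 (2 ^ (k + 1)) := by
  intro y hy
  simp only [doubling, mem_union, mem_map, mem_filter, mem_Icc, addRightEmbedding_apply] at hy
  rw [mem_Icc, pow_succ]
  rcases hy with hy | ⟨x, ⟨hx, -⟩, rfl⟩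
  · have := mem_Icc.1 (hA hy); omega
  · omega

lemma filter_doubling (hA : A ⊆ Icc 1 (2 ^ k)) : (doubling k A φ).filter (· ≤ 2 ^ k) = A := by
  ext x
  rw [mem_filter]
  by_cases hx : x ≤ 2 ^ k
  · rw [mem_doubling_of_le hx, and_iff_left hx]
  · exact iff_of_false (fun h => hx h.2) fun h => hx (mem_Icc.1 (hA h)).2

lemma doubling_mem_rvalidSets (hA : A ∈ rvalidSets k) : doubling k A φ ∈ rvalidSets (k + 1) := by
  obtain ⟨hsub, hvalid⟩ := mem_rvalidSets.1 hA
  refine mem_rvalidSets.2 ⟨doubling_subset hsub, isRvalidSet_succ_iff.2 ⟨?_, ?_⟩⟩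
  · exact (isRvalidSet_congr fun x hx => mem_doubling_of_le hx).2 hvalid
  · intro i hi j hj hij
    rw [mem_doubling_of_le (mem_Icc.1 hi).2, mem_doubling_of_le (mem_Icc.1 hj).2] at hij
    rw [add_mem_doubling hsub hi, add_mem_doubling hsub hj, decide_eq_decide.2 hij]

lemma filter_mem_rvalidSets (hB : B ∈ rvalidSets (k + 1)) :
    B.filter (· ≤ 2 ^ k) ∈ rvalidSets k := by
  obtain ⟨hsub, hvalid⟩ := mem_rvalidSets.1 hB
  refine mem_rvalidSets.2 ⟨fun x hx => ?_, ?_⟩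
  · rw [mem_filter] at hx
    exact mem_Icc.2 ⟨(mem_Icc.1 (hsub hx.1)).1, hx.2⟩
  · refine (isRvalidSet_congr fun x hx => ?_).2 (isRvalidSet_succ_iff.1 hvalid).1
    rw [mem_filter, and_iff_left hx]

lemma exists_eq_doubling_filter (hB : B ∈ rvalidSets (k + 1)) :
    ∃ φ, B = doubling k (B.filter (· ≤ 2 ^ k)) φ := by
  obtain ⟨hsub, hvalid⟩ := mem_rvalidSets.1 hB
  have hlow := (mem_rvalidSets.1 (filter_mem_rvalidSets hB)).1
  have hmem : ∀ x ∈ Icc 1 (2 ^ k), x ∈ B.filter (· ≤ 2 ^ k) ↔ x ∈ B := fun x hx => by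
    rw [mem_filter, and_iff_left (mem_Icc.1 hx).2]
  obtain ⟨φ, hφ⟩ := exists_bool_factor (S := ↑(Icc 1 (2 ^ k)))
    (p := (· ∈ B.filter (· ≤ 2 ^ k))) (q := (· + 2 ^ k ∈ B)) fun x hx y hy hxy =>
      (isRvalidSet_succ_iff.1 hvalid).2 x hx y hy <| by rwa [← hmem x hx, ← hmem y hy]
  refine ⟨φ, ext fun y => ?_⟩
  rcases le_or_gt y (2 ^ k) with hy | hy
  · rw [mem_doubling_of_le hy, mem_filter, and_iff_left hy]
  rcases le_or_gt y (2 ^ (k + 1)) with hy' | hy'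
  · obtain ⟨x, rfl⟩ : ∃ x, y = x + 2 ^ k := ⟨y - 2 ^ k, by omega⟩
    have hx : x ∈ Icc 1 (2 ^ k) := mem_Icc.2 ⟨by omega, by rw [pow_succ] at hy'; omega⟩
    rw [add_mem_doubling hlow hx]
    exact hφ x hx
  · exact iff_of_false (fun h => (mem_Icc.1 (hsub h)).2.not_gt hy')
      fun h => (mem_Icc.1 (doubling_subset hlow h)).2.not_gt hy'

lemma filter_rvalidSets_eq_image_doubling (hA : A ∈ rvalidSets k) :
    (rvalidSets (k + 1)).filter (fun B => B.filter (· ≤ 2 ^ k) = A) =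
      univ.image (doubling k A) := by
  have hsub := (mem_rvalidSets.1 hA).1
  ext B
  simp only [mem_filter, mem_image, mem_univ, true_and]
  constructor
  · rintro ⟨hB, rfl⟩
    obtain ⟨φ, hφ⟩ := exists_eq_doubling_filter hB
    exact ⟨φ, hφ.symm⟩
  · rintro ⟨φ, rfl⟩
    exact ⟨doubling_mem_rvalidSets hA, filter_doubling hsub⟩

lemma doubling_injective (hA : A ∈ rvalidSets k) (hne : A.Nonempty) :
    Function.Injective (doubling k A) := by
  obtain ⟨hsub, h1, -⟩ := mem_rvalidSets.1 hA
  obtain ⟨a, ha⟩ := hne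
  intro φ ψ h
  have hfalse := congrArg (1 + 2 ^ k ∈ ·) h
  have htrue := congrArg (a + 2 ^ k ∈ ·) h
  simp only [add_mem_doubling hsub (one_mem_Icc_two_pow k), add_mem_doubling hsub (hsub ha), h1, ha,
    decide_false, decide_true, eq_iff_iff, Bool.coe_iff_coe] at hfalse htrue
  funext b
  cases b <;> assumption

lemma card_image_doubling_empty : (univ.image (doubling k ∅)).card = 2 := by
  have hconst : doubling k ∅ = (fun b => doubling k ∅ fun _ => b) ∘ (fun φ => φ false) := by
    funext φ; simp [doubling]
  have hinj : Function.Injective fun b => doubling k ∅ fun _ => b := by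
    intro b b' h
    have h1 := congrArg (1 + 2 ^ k ∈ ·) h
    simp only [add_mem_doubling (empty_subset _) (one_mem_Icc_two_pow k), eq_iff_iff,
      Bool.coe_iff_coe] at h1
    exact h1
  rw [hconst, ← image_image, image_univ_of_surjective fun b => ⟨fun _ => b, rfl⟩,
    card_image_of_injective _ hinj, card_univ, Fintype.card_bool]

lemma empty_mem_rvalidSets : ∅ ∈ rvalidSets k :=
  mem_rvalidSets.2 ⟨empty_subset _, by simp [IsRvalidSet]⟩

lemma card_rvalidSets_succ : (rvalidSets (k + 1)).card + 2 = 4 * (rvalidSets k).card := by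
  have hfiber : ∀ A ∈ (rvalidSets k).erase ∅,
      ((rvalidSets (k + 1)).filter fun B => B.filter (· ≤ 2 ^ k) = A).card = 4 := by
    intro A hA
    obtain ⟨hne, hA⟩ := mem_erase.1 hA
    rw [filter_rvalidSets_eq_image_doubling hA,
      card_image_of_injective _ (doubling_injective hA (nonempty_iff_ne_empty.2 hne))]
    simp
  rw [card_eq_sum_card_fiberwise fun B hB => filter_mem_rvalidSets hB,
    ← sum_erase_add _ _ empty_mem_rvalidSets, sum_congr rfl hfiber,
    filter_rvalidSets_eq_image_doubling empty_mem_rvalidSets, card_image_doubling_empty,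
    sum_const, card_erase_of_mem empty_mem_rvalidSets, smul_eq_mul]
  have := card_pos.2 ⟨∅, empty_mem_rvalidSets (k := k)⟩
  omega

end Doubling

lemma rvalidSets_zero : rvalidSets 0 = {∅} := by
  ext A
  simp only [mem_rvalidSets, IsRvalidSet, pow_zero, Icc_self, subset_singleton_iff,
    Nat.not_lt_zero, IsEmpty.forall_iff, forall_const, and_true, mem_singleton]
  constructor
  · rintro ⟨rfl | rfl, h⟩
    · rfl
    · exact absurd (mem_singleton_self 1) h
  · rintro rfl
    exact ⟨Or.inl rfl, notMem_empty 1⟩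

lemma three_mul_card_rvalidSets (k : ℕ) : 3 * (rvalidSets k).card = 4 ^ k + 2 := by
  induction k with
  | zero => simp [rvalidSets_zero]
  | succ k ih =>
    have := card_rvalidSets_succ (k := k)
    rw [pow_succ]
    omega

theorem stmt15 (k : ℕ) :
    3 * {ρ : Fin 2 → Finset ℕ | IsRvalid k ρ}.ncard = 4 ^ k + 2 := by
  have hinj : Function.Injective fun A : Finset ℕ => ![Icc 1 (2 ^ k) \ A, A] :=
    fun A B h => congrFun h 1
  rw [setOf_isRvalid_fin_two, Set.ncard_coe_finset, card_image_of_injective _ hinj,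
    three_mul_card_rvalidSets]
end
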